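/- arXiv:2407.00522 — 2 statements merged into one kernel-verified Lean document; each statement's English description precedes it below -/
import Mathlib

section
/- For every complex number p with 0 < |p| < 1 and every z ∈ ℂ ∖ {0}, the infinite product ∏_{s=1}^∞ (1 − p^s z)(1 − p^s z^{−1})/(1 − p^s)^2 converges (the family of factors is multipliable), and the resulting function ϑ(z) = (1 − z)·∏_{s=1}^∞ (1 − p^s z)(1 − p^s z^{−1})/(1 − p^s)^2 is analytic on ℂ ∖ {0}. -/
/-!
Writing `c s = p^(s+1) / (1 - p^(s+1))^2`, each factor of the product equals
`1 + c s · (2 - z - z⁻¹)`. The coefficients `c s` are dominated by a geometric series, and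
`2 - z - z⁻¹` is bounded on compact subsets of `ℂ ∖ {0}`, so the product converges locally
uniformly there; a locally uniform limit of holomorphic functions is holomorphic.
-/

/-- The Jacobi theta function
`ϑ(z) = (1 − z) · ∏_{s=1}^∞ (1 − p^s z)(1 − p^s z⁻¹)/(1 − p^s)^2`. -/
noncomputable def jTheta (p z : ℂ) : ℂ :=
  (1 - z) * ∏' s : ℕ,
    (1 - p ^ (s + 1) * z) * (1 - p ^ (s + 1) * z⁻¹) / (1 - p ^ (s + 1)) ^ 2

noncomputable def jThetaCoeff (p : ℂ) (s : ℕ) : ℂ :=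
  p ^ (s + 1) / (1 - p ^ (s + 1)) ^ 2

theorem Summable.hasProdLocallyUniformlyOn_one_add_mul {ι α R : Type*} [TopologicalSpace α]
    [LocallyCompactSpace α] [NormedCommRing R] [NormOneClass R] [CompleteSpace R] {a : ι → R}
    (ha : Summable fun i ↦ ‖a i‖) {g : α → R} {U : Set α} (hU : IsOpen U)
    (hg : ContinuousOn g U) :
    HasProdLocallyUniformlyOn (fun i x ↦ 1 + a i * g x) (fun x ↦ ∏' i, (1 + a i * g x)) U := by
  refine hasProdLocallyUniformlyOn_of_forall_compact hU fun K hKU hK ↦ ?_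
  obtain ⟨M, hM⟩ := hK.exists_bound_of_continuousOn (hg.mono hKU)
  refine hasProdUniformlyOn_one_add hK (ha.mul_right M) (.of_forall fun i x hx ↦ ?_)
    fun i ↦ continuousOn_const.mul (hg.mono hKU)
  exact (norm_mul_le _ _).trans (mul_le_mul_of_nonneg_left (hM x hx) (norm_nonneg _))

theorem HasProdLocallyUniformlyOn.differentiableOn {ι E : Type*} [NormedCommRing E]
    [NormedAlgebra ℂ E] [CompleteSpace E] {f : ι → ℂ → E} {g : ℂ → E} {U : Set ℂ}
    (h : HasProdLocallyUniformlyOn f g U) (hf : ∀ i, DifferentiableOn ℂ (f i) U)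
    (hU : IsOpen U) : DifferentiableOn ℂ g U :=
  TendstoLocallyUniformlyOn.differentiableOn h
    (.of_forall fun _ ↦ DifferentiableOn.fun_finsetProd fun i _ ↦ hf i) hU

section JacobiTheta

variable {p : ℂ}

theorem one_sub_norm_le_norm_one_sub_pow (hp : ‖p‖ ≤ 1) (s : ℕ) :
    1 - ‖p‖ ≤ ‖1 - p ^ (s + 1)‖ := by
  have hpow : ‖p ^ (s + 1)‖ ≤ ‖p‖ := by
    rw [norm_pow]
    exact pow_le_of_le_one (norm_nonneg p) hp s.succ_ne_zero
  calc 1 - ‖p‖ ≤ ‖(1 : ℂ)‖ - ‖p ^ (s + 1)‖ := by rw [norm_one]; linarith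
    _ ≤ ‖1 - p ^ (s + 1)‖ := norm_sub_norm_le _ _

theorem one_sub_pow_ne_zero (hp : ‖p‖ < 1) (s : ℕ) : 1 - p ^ (s + 1) ≠ 0 :=
  norm_pos_iff.mp <| (sub_pos.mpr hp).trans_le (one_sub_norm_le_norm_one_sub_pow hp.le s)

theorem norm_jThetaCoeff_le (hp : ‖p‖ < 1) (s : ℕ) :
    ‖jThetaCoeff p s‖ ≤ ‖p‖ / (1 - ‖p‖) ^ 2 * ‖p‖ ^ s := by
  have hden : (1 - ‖p‖) ^ 2 ≤ ‖1 - p ^ (s + 1)‖ ^ 2 :=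
    pow_le_pow_left₀ (sub_nonneg.mpr hp.le) (one_sub_norm_le_norm_one_sub_pow hp.le s) 2
  calc ‖jThetaCoeff p s‖ = ‖p‖ ^ (s + 1) / ‖1 - p ^ (s + 1)‖ ^ 2 := by
        simp [jThetaCoeff, norm_pow]
    _ ≤ ‖p‖ ^ (s + 1) / (1 - ‖p‖) ^ 2 :=
        div_le_div_of_nonneg_left (by positivity) (by nlinarith) hden
    _ = ‖p‖ / (1 - ‖p‖) ^ 2 * ‖p‖ ^ s := by ring

theorem summable_norm_jThetaCoeff (hp : ‖p‖ < 1) : Summable fun s ↦ ‖jThetaCoeff p s‖ :=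
  .of_nonneg_of_le (fun _ ↦ norm_nonneg _) (norm_jThetaCoeff_le hp)
    ((summable_geometric_of_lt_one (norm_nonneg p) hp).mul_left _)

theorem jTheta_factor_eq {s : ℕ} (hs : 1 - p ^ (s + 1) ≠ 0) {z : ℂ} (hz : z ≠ 0) :
    (1 - p ^ (s + 1) * z) * (1 - p ^ (s + 1) * z⁻¹) / (1 - p ^ (s + 1)) ^ 2
      = 1 + jThetaCoeff p s * (2 - z - z⁻¹) := by
  rw [jThetaCoeff]
  field_simp
  ring

end JacobiTheta

theorem jTheta_multipliable_and_analytic_general (p : ℂ)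
    (hp1 : ‖p‖ < 1) :
    (∀ z : ℂ, z ≠ 0 → Multipliable (fun s : ℕ =>
      (1 - p ^ (s + 1) * z) * (1 - p ^ (s + 1) * z⁻¹) / (1 - p ^ (s + 1)) ^ 2)) ∧
    AnalyticOnNhd ℂ (jTheta p) {z : ℂ | z ≠ 0} := by
  have hg : DifferentiableOn ℂ (fun z : ℂ ↦ 2 - z - z⁻¹) {z | z ≠ 0} :=
    ((differentiableOn_const 2).sub differentiableOn_id).sub differentiableOn_inv
  have hprod := (summable_norm_jThetaCoeff hp1).hasProdLocallyUniformlyOn_one_add_mul isOpen_ne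
    hg.continuousOn
  have hfactor : ∀ z : ℂ, z ≠ 0 → (fun s : ℕ ↦
      (1 - p ^ (s + 1) * z) * (1 - p ^ (s + 1) * z⁻¹) / (1 - p ^ (s + 1)) ^ 2)
        = fun s ↦ 1 + jThetaCoeff p s * (2 - z - z⁻¹) :=
    fun z hz ↦ funext fun s ↦ jTheta_factor_eq (one_sub_pow_ne_zero hp1 s) hz
  refine ⟨fun z hz ↦ hfactor z hz ▸ (hprod.hasProd hz).multipliable, ?_⟩
  have hdiff := hprod.differentiableOn
    (fun s ↦ (differentiableOn_const 1).add (hg.const_mul _)) isOpen_ne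
  refine DifferentiableOn.analyticOnNhd ?_ isOpen_ne
  refine (((differentiableOn_const 1).sub differentiableOn_id).mul hdiff).congr fun z hz ↦ ?_
  rw [jTheta, hfactor z hz]
  rfl

/-- For `0 < |p| < 1`, the infinite product defining the Jacobi theta function converges
for every `z ≠ 0`, and `ϑ` is analytic on `ℂ ∖ {0}`. -/
theorem jTheta_multipliable_and_analytic (p : ℂ)
    (hp0 : 0 < ‖p‖) (hp1 : ‖p‖ < 1) :
    (∀ z : ℂ, z ≠ 0 → Multipliable (fun s : ℕ =>
      (1 - p ^ (s + 1) * z) * (1 - p ^ (s + 1) * z⁻¹) / (1 - p ^ (s + 1)) ^ 2)) ∧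
    AnalyticOnNhd ℂ (jTheta p) {z : ℂ | z ≠ 0} :=
  jTheta_multipliable_and_analytic_general p hp1
end

section
/- Let σ be a complex-valued function analytic on an open neighborhood of the closed annulus {z ∈ ℂ : |p| ≤ |z| ≤ 1}, and let L_1, …, L_r be pairwise distinct complex numbers with |p| < |L_i| < 1 for all i. Then (1/2πi)∮_{|z|=1} σ(z)/(z·∏_{i=1}^r ϑ(L_i/z)) dz − (1/2πi)∮_{|z|=|p|} σ(z)/(z·∏_{i=1}^r ϑ(L_i/z)) dz = Σ_{i=1}^r σ(L_i)/∏_{j≠i} ϑ(L_j/L_i). (This is the residue computation underlying the elliptic push-forward formula along a projective bundle.) -/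
/-!
On the closed annulus `|p| ≤ |z| ≤ 1` the functions `z ↦ ϑ(L_i/z)` vanish only at `z = L_i`,
where they have simple zeros with derivative `ϑ'(1) · (-L_i/L_i²) = 1/L_i`. Hence the integrand
has simple poles at the `L_i` with residues `σ(L_i)/∏_{j≠i} ϑ(L_j/L_i)`, and the difference of the
two circle integrals is `2πi` times their sum. This residue theorem is reduced to Cauchy's theorem
on an annulus: dividing each zero out by `dslope` leaves `g(z)/∏(z - L_i)` with `g` holomorphic,
partial fractions split this into terms `g(z)/(z - a)`, and `g(z)/(z - a) = dslope g a z +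
g(a)/(z - a)`. That `ϑ` is holomorphic and zero-free on `|p| < |z| < 1/|p|` away from `z = 1`
follows from the locally uniform convergence of its product, whose factors are `1 + O(|p|^s)`.
-/

open Finset

open Metric Complex Filter

theorem inv_prod_sub_eq_sum {ι : Type*} [Fintype ι] [DecidableEq ι] [Nonempty ι] {a : ι → ℂ}
    (ha : Function.Injective a) {z : ℂ} (hz : ∀ i, z ≠ a i) :
    (∏ i, (z - a i))⁻¹ = ∑ i, ((z - a i) * ∏ j ∈ univ.erase i, (a i - a j))⁻¹ := by
  have hlagrange : ∑ i, ∏ j ∈ univ.erase i, (z - a j) / (a i - a j) = 1 := by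
    simpa [Lagrange.basis, Lagrange.basisDivisor, Polynomial.eval_finsetSum,
      Polynomial.eval_prod, div_eq_inv_mul]
      using congrArg (Polynomial.eval z) (Lagrange.sum_basis ha.injOn univ_nonempty)
  rw [← one_mul (∏ i, (z - a i))⁻¹, ← hlagrange, sum_mul]
  refine sum_congr rfl fun i _ => ?_
  have hzi : z - a i ≠ 0 := sub_ne_zero.mpr (hz i)
  have hprod : ∏ j ∈ univ.erase i, (z - a j) ≠ 0 :=
    prod_ne_zero_iff.mpr fun j _ => sub_ne_zero.mpr (hz j)
  rw [← mul_prod_erase univ (fun j => z - a j) (mem_univ i), prod_div_distrib]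
  field_simp

theorem sphere_subset_closedBall_diff_ball {X : Type*} [PseudoMetricSpace X] {c : X}
    {r ρ R : ℝ} (hrρ : r ≤ ρ) (hρR : ρ ≤ R) : sphere c ρ ⊆ closedBall c R \ ball c r :=
  fun _ hz => ⟨sphere_subset_closedBall.trans (closedBall_subset_closedBall hρR) hz,
    by rw [mem_ball, not_lt, mem_sphere.mp hz]; exact hrρ⟩

theorem circleIntegral_eq_of_differentiableOn_of_annulus_subset {E : Type*}
    [NormedAddCommGroup E] [NormedSpace ℂ E] {c : ℂ} {r R : ℝ} {U : Set ℂ} {g : ℂ → E}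
    (hr : 0 < r) (hrR : r ≤ R) (hU : IsOpen U) (hKU : closedBall c R \ ball c r ⊆ U)
    (hg : DifferentiableOn ℂ g U) : (∮ z in C(c, R), g z) = ∮ z in C(c, r), g z :=
  circleIntegral_eq_of_differentiable_on_annulus_off_countable hr hrR Set.countable_empty
    (hg.continuousOn.mono hKU) fun _ hz => hg.differentiableAt (hU.mem_nhds
      (hKU (Set.sdiff_subset_sdiff ball_subset_closedBall ball_subset_closedBall hz.1)))

theorem circleIntegral_sub_circleIntegral_div_sub {c a : ℂ} {r R : ℝ} {U : Set ℂ} {g : ℂ → ℂ}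
    (hr : 0 < r) (hU : IsOpen U) (hKU : closedBall c R \ ball c r ⊆ U)
    (hg : DifferentiableOn ℂ g U) (ha : a ∈ ball c R \ closedBall c r) :
    (∮ z in C(c, R), g z / (z - a)) - (∮ z in C(c, r), g z / (z - a)) =
      2 * Real.pi * I * g a := by
  have haR : dist a c < R := ha.1
  have har : r < dist a c := not_le.mp ha.2
  have hrR : r ≤ R := (har.trans haR).le
  have hd : DifferentiableOn ℂ (dslope g a) U := (differentiableOn_dslope (hU.mem_nhds
    (hKU (Set.sdiff_subset_sdiff ball_subset_closedBall ball_subset_closedBall ha)))).mpr hg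
  have hsplit : ∀ ρ : ℝ, r ≤ ρ → ρ ≤ R → a ∉ sphere c ρ →
      (∮ z in C(c, ρ), g z / (z - a)) =
        (∮ z in C(c, ρ), dslope g a z) + g a * ∮ z in C(c, ρ), (z - a)⁻¹ := by
    intro ρ hrρ hρR haρ
    have hρ : 0 ≤ ρ := hr.le.trans hrρ
    have hne : ∀ z ∈ sphere c ρ, z - a ≠ 0 := fun z hz => sub_ne_zero.mpr fun h => haρ (h ▸ hz)
    rw [← circleIntegral.integral_const_mul, ← circleIntegral.integral_add]
    · refine circleIntegral.integral_congr hρ fun z hz => ?_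
      rw [dslope_of_ne _ (sub_ne_zero.mp (hne z hz)), slope_def_field]
      field_simp [hne z hz]
      ring
    · exact (hd.continuousOn.mono ((sphere_subset_closedBall_diff_ball hrρ hρR).trans hKU)
        ).circleIntegrable hρ
    · exact (continuousOn_const.mul ((continuousOn_id.sub continuousOn_const).inv₀ hne)
        ).circleIntegrable hρ
  have hinner : (∮ z in C(c, r), (z - a)⁻¹) = 0 := by
    have hne : ∀ z ∈ closedBall c r, z - a ≠ 0 := fun z hz =>
      sub_ne_zero.mpr fun h => ha.2 (h ▸ hz)
    refine circleIntegral_eq_zero_of_differentiable_on_off_countable hr.le Set.countable_empty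
      ((continuousOn_id.sub continuousOn_const).inv₀ hne) fun z hz => ?_
    exact (differentiableAt_id.sub_const a).inv (hne z (ball_subset_closedBall hz.1))
  rw [hsplit R hrR le_rfl (fun h => haR.ne (mem_sphere.mp h)),
    hsplit r le_rfl hrR (fun h => har.ne' (mem_sphere.mp h)),
    circleIntegral.integral_sub_inv_of_mem_ball ha.1, hinner,
    circleIntegral_eq_of_differentiableOn_of_annulus_subset hr hrR hU hKU hd]
  ring

theorem circleIntegral_div_prod_sub_eq_sum {ι : Type*} [Fintype ι] [DecidableEq ι] [Nonempty ι]
    {c : ℂ} {a : ι → ℂ} {ρ : ℝ} {g : ℂ → ℂ} (hρ : 0 ≤ ρ) (hg : ContinuousOn g (sphere c ρ))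
    (ha : Function.Injective a) (haρ : ∀ i, a i ∉ sphere c ρ) :
    (∮ z in C(c, ρ), g z / ∏ i, (z - a i)) =
      ∑ i, ∮ z in C(c, ρ), g z / (∏ j ∈ univ.erase i, (a i - a j)) / (z - a i) := by
  have hne : ∀ i, ∀ z ∈ sphere c ρ, z - a i ≠ 0 := fun i z hz h =>
    haρ i (sub_eq_zero.mp h ▸ hz)
  have hint : ∀ i, CircleIntegrable (fun z => g z / (∏ j ∈ univ.erase i, (a i - a j)) / (z - a i))
      c ρ := fun i =>
    ((hg.div_const _).div (continuousOn_id.sub continuousOn_const) (hne i)).circleIntegrable hρ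
  rw [← circleIntegral.integral_fun_sum fun i _ => hint i]
  refine circleIntegral.integral_congr hρ fun z hz => ?_
  simp only [div_eq_mul_inv, inv_prod_sub_eq_sum ha (fun i => sub_ne_zero.mp (hne i z hz)),
    mul_sum, mul_inv]
  exact sum_congr rfl fun i _ => by ring

theorem circleIntegral_sub_circleIntegral_div_prod_sub {ι : Type*} [Fintype ι] [DecidableEq ι]
    {c : ℂ} {a : ι → ℂ} {r R : ℝ} {U : Set ℂ} {g : ℂ → ℂ} (hr : 0 < r) (hrR : r ≤ R)
    (hU : IsOpen U) (hKU : closedBall c R \ ball c r ⊆ U) (hg : DifferentiableOn ℂ g U)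
    (ha : Function.Injective a) (haK : ∀ i, a i ∈ ball c R \ closedBall c r) :
    (∮ z in C(c, R), g z / ∏ i, (z - a i)) - (∮ z in C(c, r), g z / ∏ i, (z - a i)) =
      2 * Real.pi * I * ∑ i, g (a i) / ∏ j ∈ univ.erase i, (a i - a j) := by
  rcases isEmpty_or_nonempty ι with hι | hι
  · simpa [sub_eq_zero] using
      circleIntegral_eq_of_differentiableOn_of_annulus_subset hr hrR hU hKU hg
  rw [circleIntegral_div_prod_sub_eq_sum (hr.le.trans hrR)
      (hg.continuousOn.mono ((sphere_subset_closedBall_diff_ball hrR le_rfl).trans hKU)) ha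
      fun i h => sphere_disjoint_ball.ne_of_mem h (haK i).1 rfl,
    circleIntegral_div_prod_sub_eq_sum hr.le
      (hg.continuousOn.mono ((sphere_subset_closedBall_diff_ball le_rfl hrR).trans hKU)) ha
      fun i h => (haK i).2 (sphere_subset_closedBall h),
    ← sum_sub_distrib, mul_sum]
  refine sum_congr rfl fun i _ => ?_
  exact circleIntegral_sub_circleIntegral_div_sub hr hU hKU (hg.div_const _) (haK i)

theorem circleIntegral_sub_circleIntegral_div_prod_of_simple_zeros {ι : Type*} [Fintype ι]
    [DecidableEq ι] {c : ℂ} {a : ι → ℂ} {f : ι → ℂ → ℂ} {f' : ι → ℂ} {r R : ℝ} {U : Set ℂ}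
    {h : ℂ → ℂ} (hr : 0 < r) (hrR : r ≤ R) (hU : IsOpen U)
    (hKU : closedBall c R \ ball c r ⊆ U) (hh : DifferentiableOn ℂ h U)
    (hf : ∀ i, DifferentiableOn ℂ (f i) U) (hfa : ∀ i, f i (a i) = 0)
    (hf' : ∀ i, HasDerivAt (f i) (f' i) (a i)) (hf'0 : ∀ i, f' i ≠ 0)
    (hfK : ∀ i, ∀ z ∈ closedBall c R \ ball c r, z ≠ a i → f i z ≠ 0)
    (ha : Function.Injective a) (haK : ∀ i, a i ∈ ball c R \ closedBall c r) :
    (∮ z in C(c, R), h z / ∏ i, f i z) - (∮ z in C(c, r), h z / ∏ i, f i z) =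
      2 * Real.pi * I * ∑ i, h (a i) / (f' i * ∏ j ∈ univ.erase i, f j (a i)) := by
  set d : ι → ℂ → ℂ := fun i => dslope (f i) (a i)
  have hfd : ∀ i z, f i z = (z - a i) * d i z := fun i z =>
    (sub_smul_dslope_of_zero (hfa i) z).symm
  have hda : ∀ i, d i (a i) = f' i := fun i => (dslope_same _ _).trans (hf' i).deriv
  have hd : ∀ i, DifferentiableOn ℂ (d i) U := fun i =>
    (differentiableOn_dslope (hU.mem_nhds
      (hKU (Set.sdiff_subset_sdiff ball_subset_closedBall ball_subset_closedBall (haK i))))).mpr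
      (hf i)
  have hdK : ∀ i, ∀ z ∈ closedBall c R \ ball c r, d i z ≠ 0 := by
    intro i z hz
    by_cases hza : z = a i
    · exact hza ▸ hda i ▸ hf'0 i
    · exact right_ne_zero_of_mul (hfd i z ▸ hfK i z hz hza)
  set D : ℂ → ℂ := fun z => ∏ i, d i z
  have hD : DifferentiableOn ℂ D U := DifferentiableOn.fun_finsetProd fun i _ => hd i
  set V := U ∩ D ⁻¹' {0}ᶜ
  have hV : IsOpen V := hD.continuousOn.isOpen_inter_preimage hU isOpen_compl_singleton
  have hKV : closedBall c R \ ball c r ⊆ V := fun z hz =>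
    ⟨hKU hz, prod_ne_zero_iff.mpr fun i _ => hdK i z hz⟩
  have hdenom : ∀ i, f' i * ∏ j ∈ univ.erase i, f j (a i) =
      D (a i) * ∏ j ∈ univ.erase i, (a i - a j) := by
    intro i
    simp only [D, ← mul_prod_erase univ (fun j => d j (a i)) (mem_univ i), hfd, prod_mul_distrib]
    rw [hda]
    ring
  have hintegrand : (fun z => h z / ∏ i, f i z) = fun z => h z / D z / ∏ i, (z - a i) := by
    ext z
    rw [prod_congr rfl fun i _ => hfd i z, prod_mul_distrib, div_mul_eq_div_div_swap]
  simp only [hintegrand, hdenom, ← div_div]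
  exact circleIntegral_sub_circleIntegral_div_prod_sub hr hrR hV hKV
    ((hh.mono Set.inter_subset_left).div (hD.mono Set.inter_subset_left) fun z hz => hz.2) ha haK

theorem norm_one_sub_mul_one_sub_div_sq_sub_one_le {x y q : ℂ} {ε : ℝ} (hx : ‖x‖ ≤ ε)
    (hy : ‖y‖ ≤ ε) (hq : ‖q‖ ≤ ε) (hε : ε ≤ 1 / 2) :
    ‖(1 - x) * (1 - y) / (1 - q) ^ 2 - 1‖ ≤ 24 * ε := by
  have hε0 : 0 ≤ ε := (norm_nonneg q).trans hq
  have hq' : 1 / 2 ≤ ‖1 - q‖ := by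
    have := norm_sub_norm_le (1 : ℂ) q
    rw [norm_one] at this
    linarith
  have hq0 : (1 - q) ^ 2 ≠ 0 := pow_ne_zero 2 (norm_pos_iff.mp (by linarith))
  have hnum : ‖(1 - x) * (1 - y) - (1 - q) ^ 2‖ ≤ 6 * ε := calc
    ‖(1 - x) * (1 - y) - (1 - q) ^ 2‖ = ‖2 * q - x - y + x * y - q * q‖ := by ring_nf
    _ ≤ 2 * ‖q‖ + ‖x‖ + ‖y‖ + ‖x‖ * ‖y‖ + ‖q‖ * ‖q‖ := by
      have h1 := norm_sub_le (2 * q - x - y + x * y) (q * q)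
      have h2 := norm_add_le (2 * q - x - y) (x * y)
      have h3 := norm_sub_le (2 * q - x) y
      have h4 := norm_sub_le (2 * q) x
      rw [norm_mul] at h1 h2 h4
      norm_num at h4
      linarith
    _ ≤ 6 * ε := by nlinarith [norm_nonneg x, norm_nonneg y, norm_nonneg q]
  rw [div_sub_one hq0, norm_div, norm_pow, div_le_iff₀ (by positivity)]
  have : 1 / 4 ≤ ‖1 - q‖ ^ 2 := by nlinarith
  nlinarith

theorem one_sub_ne_zero_of_norm_lt_one {R : Type*} [NormedRing R] [NormOneClass R] {w : R}
    (hw : ‖w‖ < 1) : 1 - w ≠ 0 := fun h => by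
  rw [← sub_eq_zero.mp h, norm_one] at hw
  exact hw.false

noncomputable def jThetaFactor (p z : ℂ) (s : ℕ) : ℂ :=
  (1 - p ^ (s + 1) * z) * (1 - p ^ (s + 1) * z⁻¹) / (1 - p ^ (s + 1)) ^ 2

def jThetaAnnulus (p : ℂ) : Set ℂ := {z | ‖p‖ < ‖z‖ ∧ ‖z‖ < ‖p‖⁻¹}

section jTheta

variable {p z L : ℂ}

theorem jTheta_eq_mul_tprod : jTheta p = fun z => (1 - z) * ∏' s, jThetaFactor p z s := rfl

theorem jTheta_one : jTheta p 1 = 0 := by simp [jTheta]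

theorem isOpen_jThetaAnnulus : IsOpen (jThetaAnnulus p) :=
  (isOpen_lt continuous_const continuous_norm).inter (isOpen_lt continuous_norm continuous_const)

theorem one_mem_jThetaAnnulus (hp0 : p ≠ 0) (hp1 : ‖p‖ < 1) : 1 ∈ jThetaAnnulus p :=
  ⟨by simpa using hp1, by simpa using one_lt_inv₀ (norm_pos_iff.mpr hp0) |>.mpr hp1⟩

theorem ne_zero_of_mem_jThetaAnnulus (hz : z ∈ jThetaAnnulus p) : z ≠ 0 :=
  norm_pos_iff.mp ((norm_nonneg p).trans_lt hz.1)

theorem div_mem_jThetaAnnulus (hp0 : p ≠ 0) (hpL : ‖p‖ < ‖L‖) (hL1 : ‖L‖ < 1)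
    (hpz : ‖p‖ ≤ ‖z‖) (hz1 : ‖z‖ ≤ 1) : L / z ∈ jThetaAnnulus p := by
  have hp : 0 < ‖p‖ := norm_pos_iff.mpr hp0
  have hz : 0 < ‖z‖ := hp.trans_le hpz
  show ‖p‖ < ‖L / z‖ ∧ ‖L / z‖ < ‖p‖⁻¹
  rw [norm_div, lt_div_iff₀ hz, div_lt_iff₀ hz, lt_inv_mul_iff₀ hp]
  constructor <;> nlinarith

theorem isOpen_setOf_forall_div_mem_jThetaAnnulus {ι : Type*} [Finite ι] (p : ℂ) (L : ι → ℂ) :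
    IsOpen {z : ℂ | z ≠ 0 ∧ ∀ i, L i / z ∈ jThetaAnnulus p} := by
  have hcont : ContinuousOn (fun z i => L i / z) {0}ᶜ :=
    continuousOn_pi.mpr fun i => continuousOn_const.div continuousOn_id fun _ hz => hz
  convert hcont.isOpen_inter_preimage isOpen_compl_singleton
    (isOpen_set_pi Set.finite_univ fun _ _ => isOpen_jThetaAnnulus (p := p)) using 1
  ext z
  simp

theorem norm_pow_succ_le (hp1 : ‖p‖ < 1) (s : ℕ) : ‖p ^ (s + 1)‖ ≤ ‖p‖ ^ s := by
  rw [norm_pow, pow_succ]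
  exact mul_le_of_le_one_right (by positivity) hp1.le

theorem norm_pow_succ_lt_one (hp1 : ‖p‖ < 1) (s : ℕ) : ‖p ^ (s + 1)‖ < 1 :=
  norm_pow p (s + 1) ▸ pow_lt_one₀ (norm_nonneg p) hp1 s.succ_ne_zero

theorem norm_pow_succ_mul_lt (hp0 : p ≠ 0) (hz : z ∈ jThetaAnnulus p) (s : ℕ) :
    ‖p ^ (s + 1) * z‖ < ‖p‖ ^ s ∧ ‖p ^ (s + 1) * z⁻¹‖ < ‖p‖ ^ s := by
  have hp : 0 < ‖p‖ := norm_pos_iff.mpr hp0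
  have hz' : ‖z‖⁻¹ < ‖p‖⁻¹ :=
    (inv_lt_inv₀ (norm_pos_iff.mpr (ne_zero_of_mem_jThetaAnnulus hz)) hp).mpr hz.1
  have hps : ‖p‖ ^ s = ‖p‖ ^ (s + 1) * ‖p‖⁻¹ := by field_simp; ring
  rw [norm_mul, norm_mul, norm_pow, norm_inv, hps]
  exact ⟨mul_lt_mul_of_pos_left hz.2 (by positivity), mul_lt_mul_of_pos_left hz' (by positivity)⟩

theorem eventually_norm_jThetaFactor_sub_one_le (hp0 : p ≠ 0) (hp1 : ‖p‖ < 1) :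
    ∀ᶠ s in atTop, ∀ z ∈ jThetaAnnulus p, ‖jThetaFactor p z s - 1‖ ≤ 24 * ‖p‖ ^ s := by
  filter_upwards [(tendsto_pow_atTop_nhds_zero_of_lt_one (norm_nonneg p) hp1).eventually
    (ge_mem_nhds (by norm_num : (0 : ℝ) < 1 / 2))] with s hs z hz
  obtain ⟨hx, hy⟩ := norm_pow_succ_mul_lt hp0 hz s
  exact norm_one_sub_mul_one_sub_div_sq_sub_one_le hx.le hy.le (norm_pow_succ_le hp1 s) hs

theorem jThetaFactor_ne_zero (hp0 : p ≠ 0) (hp1 : ‖p‖ < 1) (hz : z ∈ jThetaAnnulus p) (s : ℕ) :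
    jThetaFactor p z s ≠ 0 := by
  have hps : ‖p‖ ^ s ≤ 1 := pow_le_one₀ (norm_nonneg p) hp1.le
  obtain ⟨hx, hy⟩ := norm_pow_succ_mul_lt hp0 hz s
  exact div_ne_zero (mul_ne_zero (one_sub_ne_zero_of_norm_lt_one (hx.trans_le hps))
    (one_sub_ne_zero_of_norm_lt_one (hy.trans_le hps)))
    (pow_ne_zero 2 (one_sub_ne_zero_of_norm_lt_one (norm_pow_succ_lt_one hp1 s)))

theorem hasProdLocallyUniformlyOn_jThetaFactor (hp0 : p ≠ 0) (hp1 : ‖p‖ < 1) :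
    HasProdLocallyUniformlyOn (fun s z => jThetaFactor p z s) (fun z => ∏' s, jThetaFactor p z s)
      (jThetaAnnulus p) := by
  have hcont : ∀ s, ContinuousOn (fun z => jThetaFactor p z s - 1) (jThetaAnnulus p) := by
    intro s z hz
    have := ne_zero_of_mem_jThetaAnnulus hz
    unfold jThetaFactor
    exact ContinuousAt.continuousWithinAt (by fun_prop (disch := assumption))
  simpa using Summable.hasProdLocallyUniformlyOn_nat_one_add isOpen_jThetaAnnulus
    ((summable_geometric_of_lt_one (norm_nonneg p) hp1).mul_left 24)
    (eventually_norm_jThetaFactor_sub_one_le hp0 hp1) hcont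

theorem differentiableOn_tprod_jThetaFactor (hp0 : p ≠ 0) (hp1 : ‖p‖ < 1) :
    DifferentiableOn ℂ (fun z => ∏' s, jThetaFactor p z s) (jThetaAnnulus p) := by
  refine ((hasProdLocallyUniformlyOn_jThetaFactor hp0 hp1).tendstoLocallyUniformlyOn_finsetRange
    ).differentiableOn (Eventually.of_forall fun n z hz => ?_) isOpen_jThetaAnnulus
  have := ne_zero_of_mem_jThetaAnnulus hz
  unfold jThetaFactor
  exact DifferentiableAt.differentiableWithinAt (by fun_prop (disch := assumption))

theorem differentiableOn_jTheta (hp0 : p ≠ 0) (hp1 : ‖p‖ < 1) :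
    DifferentiableOn ℂ (jTheta p) (jThetaAnnulus p) :=
  (differentiableOn_const 1 |>.sub differentiableOn_id).mul
    (differentiableOn_tprod_jThetaFactor hp0 hp1)

theorem differentiableAt_jTheta_div (hp0 : p ≠ 0) (hp1 : ‖p‖ < 1) (hz : z ≠ 0)
    (hLz : L / z ∈ jThetaAnnulus p) : DifferentiableAt ℂ (fun w => jTheta p (L / w)) z :=
  ((differentiableOn_jTheta hp0 hp1).differentiableAt (isOpen_jThetaAnnulus.mem_nhds hLz)).comp z
    ((differentiableAt_const L).div differentiableAt_id hz)

theorem jTheta_ne_zero (hp0 : p ≠ 0) (hp1 : ‖p‖ < 1) (hz : z ∈ jThetaAnnulus p) (hz1 : z ≠ 1) :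
    jTheta p z ≠ 0 := by
  have hsummable : Summable fun s => ‖jThetaFactor p z s - 1‖ :=
    .of_norm_bounded_eventually_nat ((summable_geometric_of_lt_one (norm_nonneg p) hp1).mul_left 24)
      (by simpa using (eventually_norm_jThetaFactor_sub_one_le hp0 hp1).mono fun s hs => hs z hz)
  have := tprod_one_add_ne_zero_of_summable (by simpa using jThetaFactor_ne_zero hp0 hp1 hz)
    hsummable
  rw [jTheta_eq_mul_tprod]
  exact mul_ne_zero (sub_ne_zero.mpr hz1.symm) (by simpa using this)

theorem hasDerivAt_jTheta_one (hp0 : p ≠ 0) (hp1 : ‖p‖ < 1) : HasDerivAt (jTheta p) (-1) 1 := by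
  have hfactor : ∀ s, jThetaFactor p 1 s = 1 := fun s => by
    rw [jThetaFactor, inv_one, mul_one, ← sq,
      div_self (pow_ne_zero 2 (one_sub_ne_zero_of_norm_lt_one (norm_pow_succ_lt_one hp1 s)))]
  have hP := ((differentiableOn_tprod_jThetaFactor hp0 hp1).differentiableAt
    (isOpen_jThetaAnnulus.mem_nhds (one_mem_jThetaAnnulus hp0 hp1))).hasDerivAt
  refine (((hasDerivAt_id (1 : ℂ)).const_sub 1).mul hP).congr_deriv ?_
  simp [hfactor]

theorem hasDerivAt_jTheta_div_self (hp0 : p ≠ 0) (hp1 : ‖p‖ < 1) (hL : L ≠ 0) :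
    HasDerivAt (fun z => jTheta p (L / z)) L⁻¹ L := by
  have hinner : HasDerivAt (fun z => L / z) (-L⁻¹) L := by
    simpa [div_eq_mul_inv, sq, hL] using (hasDerivAt_inv hL).const_mul L
  exact (hasDerivAt_jTheta_one hp0 hp1).comp_of_eq L hinner (div_self hL).symm
    |>.congr_deriv (by ring)

end jTheta

/-- The residue computation underlying the elliptic push-forward formula along a
projective bundle: for `σ` analytic on a neighborhood of the closed annulus
`|p| ≤ |z| ≤ 1` and pairwise distinct `L₁, …, L_r` with `|p| < |L_i| < 1`,
`(2πi)⁻¹ (∮_{|z|=1} − ∮_{|z|=|p|}) σ(z)/(z ∏_i ϑ(L_i/z)) dz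
  = Σ_i σ(L_i)/∏_{j≠i} ϑ(L_j/L_i)`. -/
theorem elliptic_pushforward_residue (p : ℂ)
    (hp0 : 0 < ‖p‖) (hp1 : ‖p‖ < 1)
    (σ : ℂ → ℂ) (U : Set ℂ) (hU : IsOpen U)
    (hUsub : {z : ℂ | ‖p‖ ≤ ‖z‖ ∧ ‖z‖ ≤ 1} ⊆ U)
    (hσ : AnalyticOnNhd ℂ σ U)
    (r : ℕ) (L : Fin r → ℂ) (hLinj : Function.Injective L)
    (hL : ∀ i, ‖p‖ < ‖L i‖ ∧ ‖L i‖ < 1) :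
    (2 * Real.pi * Complex.I)⁻¹ *
      ((∮ z in C(0, (1 : ℝ)), σ z / (z * ∏ i, jTheta p (L i / z))) -
        ∮ z in C(0, ‖p‖), σ z / (z * ∏ i, jTheta p (L i / z))) =
      ∑ i, σ (L i) / ∏ j ∈ univ.erase i, jTheta p (L j / L i) := by
  have hp0' : p ≠ 0 := norm_pos_iff.mp hp0
  have hK : ∀ z ∈ closedBall (0 : ℂ) 1 \ ball 0 ‖p‖, ‖p‖ ≤ ‖z‖ ∧ ‖z‖ ≤ 1 := fun z hz => by
    simpa [and_comm] using hz
  have hL0 : ∀ i, L i ≠ 0 := fun i => norm_pos_iff.mp (hp0.trans (hL i).1)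
  have hdiv : ∀ i, ∀ z ∈ closedBall (0 : ℂ) 1 \ ball 0 ‖p‖, L i / z ∈ jThetaAnnulus p :=
    fun i z hz => div_mem_jThetaAnnulus hp0' (hL i).1 (hL i).2 (hK z hz).1 (hK z hz).2
  set V := U ∩ {z : ℂ | z ≠ 0 ∧ ∀ i, L i / z ∈ jThetaAnnulus p}
  have hKV : closedBall (0 : ℂ) 1 \ ball 0 ‖p‖ ⊆ V := fun z hz =>
    ⟨hUsub (hK z hz), norm_pos_iff.mp (hp0.trans_le (hK z hz).1), fun i => hdiv i z hz⟩
  have hresidue := circleIntegral_sub_circleIntegral_div_prod_of_simple_zeros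
    (h := fun z => σ z / z) (f := fun i z => jTheta p (L i / z)) (f' := fun i => (L i)⁻¹)
    hp0 hp1.le (hU.inter (isOpen_setOf_forall_div_mem_jThetaAnnulus p L)) hKV
    ((hσ.differentiableOn.mono Set.inter_subset_left).div differentiableOn_id fun z hz => hz.2.1)
    (fun i z hz => (differentiableAt_jTheta_div hp0' hp1 hz.2.1 (hz.2.2 i)).differentiableWithinAt)
    (fun i => by rw [div_self (hL0 i), jTheta_one])
    (fun i => hasDerivAt_jTheta_div_self hp0' hp1 (hL0 i)) (fun i => inv_ne_zero (hL0 i))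
    (fun i z hz hzL => jTheta_ne_zero hp0' hp1 (hdiv i z hz)
      fun h => hzL ((div_eq_one_iff_eq (hKV hz).2.1).mp h).symm)
    hLinj (fun i => by simpa [and_comm] using hL i)
  simp only [div_mul_eq_div_div] at hresidue ⊢
  rw [hresidue, ← mul_assoc, inv_mul_cancel₀ two_pi_I_ne_zero, one_mul]
  exact sum_congr rfl fun i _ => by field_simp [hL0 i]
end
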